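/- arXiv:2002.10679 — 4 statements merged into one kernel-verified Lean document; each statement's English description precedes it below -/
import Mathlib

section
/- Let G be a finite simple bipartite graph in which every vertex has even degree, and let s be a vertex of G. Then every maximal trail starting at s is a closed trail of even length. -/
/-!
A maximal trail ending at `v` uses every edge at `v`, so it meets `v` in `deg v` edges, an even
number. A trail from `s` to `v ≠ s` meets its endpoint in an odd number of edges, hence the trail
is closed; and in a bipartite graph every closed walk has even length.
-/

namespace SimpleGraph.Walk

variable {V : Type*} [Fintype V] [DecidableEq V] {G : SimpleGraph V} [DecidableRel G.Adj]

theorem IsTrail.filter_edgesFinset_eq_incidenceFinset {u v x : V} {p : G.Walk u v}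
    (hp : p.IsTrail) (hx : ∀ w, G.Adj x w → s(x, w) ∈ p.edges) :
    hp.edgesFinset.filter (x ∈ ·) = G.incidenceFinset x := by
  ext e
  simp only [Finset.mem_filter, mem_incidenceFinset]
  refine ⟨fun ⟨he, hxe⟩ => ⟨p.edges_subset_edgeSet he, hxe⟩, fun ⟨he, hxe⟩ => ⟨?_, hxe⟩⟩
  obtain ⟨w, rfl⟩ := Sym2.mem_iff_exists.mp hxe
  exact hx w he

theorem IsTrail.countP_edges_eq_degree {u v x : V} {p : G.Walk u v}
    (hp : p.IsTrail) (hx : ∀ w, G.Adj x w → s(x, w) ∈ p.edges) :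
    p.edges.countP (x ∈ ·) = G.degree x := by
  rw [← card_incidenceFinset_eq_degree, ← hp.filter_edgesFinset_eq_incidenceFinset hx,
    ← Multiset.coe_countP, Multiset.countP_eq_card_filter]
  rfl

theorem IsTrail.eq_of_forall_adj_mem_edges {u v : V} {p : G.Walk u v} (hp : p.IsTrail)
    (hv : Even (G.degree v)) (hmax : ∀ w, G.Adj v w → s(v, w) ∈ p.edges) : v = u := by
  by_contra hvu
  rw [← hp.countP_edges_eq_degree hmax, hp.even_countP_edges_iff] at hv
  exact (hv (Ne.symm hvu)).2 rfl

end SimpleGraph.Walk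

theorem stmt_2 {V : Type*} [Fintype V] (G : SimpleGraph V) [DecidableRel G.Adj]
    (hbip : G.Colorable 2)
    (heven : ∀ x : V, Even (G.degree x))
    (s v : V) (T : G.Walk s v) (hT : T.IsTrail)
    (hmax : ∀ w : V, G.Adj v w → s(v, w) ∈ T.edges) :
    v = s ∧ Even T.length := by
  classical
  obtain rfl := hT.eq_of_forall_adj_mem_edges (heven v) hmax
  exact ⟨rfl, SimpleGraph.two_colorable_iff_forall_loop_even.mp hbip v T⟩
end

section
/- Let m ≥ 1 and let G be the double wheel graph consisting of a cycle v₀v₁⋯v_{4m-1} of length 4m together with two hub vertices x and y each adjacent to all cycle vertices (x and y nonadjacent). Then for the starting vertex s = v₀, the set S = {v₀, v₂, v₄, …, v_{4m-2}} of even-indexed rim vertices is an even kernel of G: it contains v₀, is independent, each odd-indexed rim vertex has exactly 2 neighbors in S, and each of x, y has exactly 2m neighbors in S. -/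
/-- The double wheel graph with rim cycle `v₀ v₁ ⋯ v_{m-1}` of `m` vertices
(`Sum.inl i`) together with two hubs (`Sum.inr 0 = x` and `Sum.inr 1 = y`)
adjacent to every rim vertex, the hubs being nonadjacent. -/
def doubleWheelRim (m : ℕ) : SimpleGraph (Fin m ⊕ Fin 2) :=
  SimpleGraph.fromRel (fun a b =>
    match a, b with
    | Sum.inl i, Sum.inl j => (j : ℕ) = ((i : ℕ) + 1) % m
    | Sum.inl _, Sum.inr _ => True
    | _, _ => False)

/-! Since the rim has even length, consecutive rim vertices have indices of opposite parity.
Hence the even-indexed rim vertices are pairwise nonadjacent, and both rim neighbours of an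
odd-indexed vertex are even-indexed (they are distinct once the rim has more than two vertices).
A hub is adjacent to the whole rim, so it sees all `2m` even-indexed vertices. -/

open Sum

lemma Nat.add_one_mod_eq_or {a n : ℕ} (h : a < n) :
    (a + 1) % n = a + 1 ∧ a + 1 < n ∨ (a + 1) % n = 0 ∧ a + 1 = n := by
  rcases (Nat.add_one_le_of_lt h).lt_or_eq with hlt | heq
  · exact .inl ⟨Nat.mod_eq_of_lt hlt, hlt⟩
  · exact .inr ⟨by rw [heq, Nat.mod_self], heq⟩

lemma Fin.ncard_setOf_val_mod_two_eq_zero (k : ℕ) :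
    {i : Fin (2 * k) | (i : ℕ) % 2 = 0}.ncard = k := by
  have hrange : {i : Fin (2 * k) | (i : ℕ) % 2 = 0} =
      Set.range (fun j : Fin k => (⟨2 * j, by omega⟩ : Fin (2 * k))) := by
    ext i
    simp only [Set.mem_ofPred_eq, Set.mem_range, Fin.ext_iff]
    exact ⟨fun hi => ⟨⟨i / 2, by omega⟩, by simp only; omega⟩, by rintro ⟨j, hj⟩; omega⟩
  rw [hrange, Set.ncard_range_of_injective (fun j j' h => by simpa [Fin.ext_iff] using h),
    Nat.card_eq_fintype_card, Fintype.card_fin]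

section DoubleWheel

variable {n : ℕ}

lemma doubleWheelRim_adj_inl_inl {i j : Fin n} :
    (doubleWheelRim n).Adj (inl i) (inl j) ↔
      i ≠ j ∧ ((j : ℕ) = (i + 1) % n ∨ (i : ℕ) = (j + 1) % n) := by
  simp [doubleWheelRim]

lemma doubleWheelRim_adj_inr_inl (h : Fin 2) (j : Fin n) :
    (doubleWheelRim n).Adj (inr h) (inl j) := by
  simp [doubleWheelRim]

lemma doubleWheelRim_adj_inl_mod_two_ne (hn : 2 ∣ n) {i j : Fin n}
    (hij : (doubleWheelRim n).Adj (inl i) (inl j)) : (i : ℕ) % 2 ≠ j % 2 := by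
  obtain ⟨-, h | h⟩ := doubleWheelRim_adj_inl_inl.1 hij
  all_goals rw [h, Nat.mod_mod_of_dvd _ hn]; omega

lemma setOf_doubleWheelRim_adj_inl_of_pos {i : Fin n} (hi : 0 < (i : ℕ)) :
    {j | (doubleWheelRim n).Adj (inl i) (inl j)} =
      {⟨(i + 1) % n, Nat.mod_lt _ i.pos⟩, ⟨i - 1, by omega⟩} := by
  ext j
  have hi' := Nat.add_one_mod_eq_or i.isLt
  have hj' := Nat.add_one_mod_eq_or j.isLt
  simp only [Set.mem_ofPred_eq, Set.mem_insert_iff, Set.mem_singleton_iff,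
    doubleWheelRim_adj_inl_inl, ne_eq, Fin.ext_iff]
  omega

lemma ncard_setOf_doubleWheelRim_adj_inl (hn : 2 < n) {i : Fin n} (hi : 0 < (i : ℕ)) :
    {j | (doubleWheelRim n).Adj (inl i) (inl j)}.ncard = 2 := by
  have hi' := Nat.add_one_mod_eq_or i.isLt
  rw [setOf_doubleWheelRim_adj_inl_of_pos hi, Set.ncard_pair]
  simp only [ne_eq, Fin.ext_iff]
  omega

def evenRim (n : ℕ) : Set (Fin n ⊕ Fin 2) :=
  {v | ∃ i : Fin n, v = inl i ∧ (i : ℕ) % 2 = 0}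

lemma evenRim_eq_image : evenRim n = inl '' {i : Fin n | (i : ℕ) % 2 = 0} := by
  ext v
  constructor
  · rintro ⟨i, rfl, hi⟩
    exact ⟨i, hi, rfl⟩
  · rintro ⟨i, hi, rfl⟩
    exact ⟨i, rfl, hi⟩

lemma ncard_evenRim (k : ℕ) : (evenRim (2 * k)).ncard = k := by
  rw [evenRim_eq_image, Set.ncard_image_of_injective _ inl_injective,
    Fin.ncard_setOf_val_mod_two_eq_zero]

lemma not_doubleWheelRim_adj_of_mem_evenRim (hn : 2 ∣ n) {a b : Fin n ⊕ Fin 2}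
    (ha : a ∈ evenRim n) (hb : b ∈ evenRim n) : ¬ (doubleWheelRim n).Adj a b := by
  obtain ⟨i, rfl, hi⟩ := ha
  obtain ⟨j, rfl, hj⟩ := hb
  exact fun hij => doubleWheelRim_adj_inl_mod_two_ne hn hij (hi.trans hj.symm)

lemma setOf_doubleWheelRim_adj_inl_mem_evenRim (hn : 2 ∣ n) {i : Fin n}
    (hi : (i : ℕ) % 2 = 1) :
    {w | (doubleWheelRim n).Adj (inl i) w ∧ w ∈ evenRim n} =
      inl '' {j | (doubleWheelRim n).Adj (inl i) (inl j)} := by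
  ext w
  constructor
  · rintro ⟨hadj, j, rfl, -⟩
    exact ⟨j, hadj, rfl⟩
  · rintro ⟨j, hadj, rfl⟩
    exact ⟨hadj, j, rfl, by have := doubleWheelRim_adj_inl_mod_two_ne hn hadj; omega⟩

lemma setOf_doubleWheelRim_adj_inr_mem_evenRim (h : Fin 2) :
    {w | (doubleWheelRim n).Adj (inr h) w ∧ w ∈ evenRim n} = evenRim n := by
  ext w
  refine ⟨And.right, fun hw => ⟨?_, hw⟩⟩
  obtain ⟨j, rfl, -⟩ := hw
  exact doubleWheelRim_adj_inr_inl h j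

end DoubleWheel

theorem stmt_9 (m : ℕ) (hm : 1 ≤ m) :
    let G := doubleWheelRim (4 * m)
    let S : Set (Fin (4 * m) ⊕ Fin 2) := {v | ∃ i : Fin (4 * m), v = Sum.inl i ∧ (i : ℕ) % 2 = 0}
    (Sum.inl (⟨0, by omega⟩ : Fin (4 * m)) : Fin (4 * m) ⊕ Fin 2) ∈ S ∧
    (∀ a ∈ S, ∀ b ∈ S, ¬ G.Adj a b) ∧
    (∀ i : Fin (4 * m), (i : ℕ) % 2 = 1 →
      {w | G.Adj (Sum.inl i) w ∧ w ∈ S}.ncard = 2) ∧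
    (∀ h : Fin 2, {w | G.Adj (Sum.inr h) w ∧ w ∈ S}.ncard = 2 * m) := by
  intro G S
  have hS : S = evenRim (4 * m) := rfl
  have h2n : 2 ∣ 4 * m := ⟨2 * m, by ring⟩
  refine ⟨⟨⟨0, by omega⟩, rfl, rfl⟩, ?_, ?_, ?_⟩
  · intro a ha b hb
    exact not_doubleWheelRim_adj_of_mem_evenRim h2n ha hb
  · intro i hi
    rw [hS, setOf_doubleWheelRim_adj_inl_mem_evenRim h2n hi,
      Set.ncard_image_of_injective _ inl_injective,
      ncard_setOf_doubleWheelRim_adj_inl (by omega) (by omega)]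
  · intro h
    rw [hS, setOf_doubleWheelRim_adj_inr_mem_evenRim, show 4 * m = 2 * (2 * m) by ring,
      ncard_evenRim]
end

section
/- Let m ≥ 0, let n = 3m + 1, and let Eₙ be the octahedral path (defined by: uᵢ is adjacent to vᵢ, wᵢ, u_{i+1}, w_{i+1}, u_{i-1}, v_{i-1}; vᵢ is adjacent to uᵢ, wᵢ, v_{i+1}, u_{i+1}, v_{i-1}, w_{i-1}; wᵢ is adjacent to uᵢ, vᵢ, w_{i+1}, v_{i+1}, w_{i-1}, u_{i-1}; indices outside [0,n] omitted). Let S = {u_{3i} : 0 ≤ i ≤ m} ∪ {v_{3i+1} : 0 ≤ i ≤ m}. Then S is an independent set, and every vertex not in S has an even number of neighbors in S; specifically, for 0 ≤ i ≤ m the sets N(v_{3i}) ∩ S, N(w_{3i}) ∩ S, N(u_{3i+1}) ∩ S, N(w_{3i+1}) ∩ S all equal {u_{3i}, v_{3i+1}}, for 0 ≤ i ≤ m−1 the sets N(u_{3i+2}) ∩ S and N(v_{3i+2}) ∩ S equal {v_{3i+1}, u_{3i+3}}, and N(w_{3i+2}) ∩ S = ∅. -/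
/-- The octahedral path `Eₙ`: vertex `(0, i)` is `uᵢ`, `(1, i)` is `vᵢ`, `(2, i)` is `wᵢ`. -/
def octPath (n : ℕ) : SimpleGraph (Fin 3 × Fin (n + 1)) :=
  SimpleGraph.fromRel (fun x y =>
    (x.2 = y.2 ∧ x.1 ≠ y.1) ∨
    ((y.2 : ℕ) = (x.2 : ℕ) + 1 ∧
      ((x.1 = 0 ∧ (y.1 = 0 ∨ y.1 = 2)) ∨
       (x.1 = 1 ∧ (y.1 = 1 ∨ y.1 = 0)) ∨
       (x.1 = 2 ∧ (y.1 = 2 ∨ y.1 = 1)))))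

/-!
Membership in `S` depends only on the residue of the layer index mod 3, and edges join layers
at distance at most one, so each `N(x) ∩ S` is found by a finite check on the residue of `x`'s
layer. For `n ≡ 1 (mod 3)` the last layer has residue `1`, so the boundary never cuts off one of
the two neighbours in `S`, and every count is `2` or `0`.
-/

namespace OctPath

/-- The set `S` of the lemma, on the octahedral path of any length. -/
def kernel (n : ℕ) : Set (Fin 3 × Fin (n + 1)) :=
  {x | (x.1 = 0 ∧ (x.2 : ℕ) % 3 = 0) ∨ (x.1 = 1 ∧ (x.2 : ℕ) % 3 = 1)}

variable {n : ℕ}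

theorem isIndepSet_kernel : (octPath n).IsIndepSet (kernel n) := by
  rintro ⟨a, p⟩ ha ⟨b, q⟩ hb - hadj
  simp only [kernel, Set.mem_ofPred_eq] at ha hb
  simp only [octPath, SimpleGraph.fromRel_adj, Fin.ext_iff] at hadj
  rcases ha with ⟨rfl, _⟩ | ⟨rfl, _⟩ <;> rcases hb with ⟨rfl, _⟩ | ⟨rfl, _⟩ <;>
    simp at hadj <;> omega

theorem neighborSet_inter_kernel_three_mul (i : ℕ) (hi : 3 * i + 1 ≤ n) (a : Fin 3)
    (ha : a = 1 ∨ a = 2) :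
    (octPath n).neighborSet (a, ⟨3 * i, by omega⟩) ∩ kernel n =
      {(0, ⟨3 * i, by omega⟩), (1, ⟨3 * i + 1, by omega⟩)} := by
  rcases ha with rfl | rfl <;>
  · ext ⟨b, j⟩
    simp only [octPath, kernel, SimpleGraph.mem_neighborSet, SimpleGraph.fromRel_adj,
      Set.mem_inter_iff, Set.mem_ofPred_eq, Set.mem_insert_iff, Set.mem_singleton_iff,
      Prod.mk.injEq]
    fin_cases b <;> simp [Fin.ext_iff] <;> omega

theorem neighborSet_inter_kernel_three_mul_add_one (i : ℕ) (hi : 3 * i + 1 ≤ n) (a : Fin 3)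
    (ha : a = 0 ∨ a = 2) :
    (octPath n).neighborSet (a, ⟨3 * i + 1, by omega⟩) ∩ kernel n =
      {(0, ⟨3 * i, by omega⟩), (1, ⟨3 * i + 1, by omega⟩)} := by
  rcases ha with rfl | rfl <;>
  · ext ⟨b, j⟩
    simp only [octPath, kernel, SimpleGraph.mem_neighborSet, SimpleGraph.fromRel_adj,
      Set.mem_inter_iff, Set.mem_ofPred_eq, Set.mem_insert_iff, Set.mem_singleton_iff,
      Prod.mk.injEq]
    fin_cases b <;> simp [Fin.ext_iff] <;> omega

theorem neighborSet_inter_kernel_three_mul_add_two (i : ℕ) (hi : 3 * i + 3 ≤ n) (a : Fin 3)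
    (ha : a = 0 ∨ a = 1) :
    (octPath n).neighborSet (a, ⟨3 * i + 2, by omega⟩) ∩ kernel n =
      {(1, ⟨3 * i + 1, by omega⟩), (0, ⟨3 * i + 3, by omega⟩)} := by
  rcases ha with rfl | rfl <;>
  · ext ⟨b, j⟩
    simp only [octPath, kernel, SimpleGraph.mem_neighborSet, SimpleGraph.fromRel_adj,
      Set.mem_inter_iff, Set.mem_ofPred_eq, Set.mem_insert_iff, Set.mem_singleton_iff,
      Prod.mk.injEq]
    fin_cases b <;> simp [Fin.ext_iff] <;> omega

theorem neighborSet_inter_kernel_three_mul_add_two_eq_empty (i : ℕ) (hi : 3 * i + 2 ≤ n) :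
    (octPath n).neighborSet (2, ⟨3 * i + 2, by omega⟩) ∩ kernel n = ∅ := by
  ext ⟨b, j⟩
  simp only [octPath, kernel, SimpleGraph.mem_neighborSet, SimpleGraph.fromRel_adj,
    Set.mem_inter_iff, Set.mem_ofPred_eq, Set.mem_empty_iff_false, iff_false]
  fin_cases b <;> simp [Fin.ext_iff] <;> omega

theorem even_ncard_neighborSet_inter_kernel (hn : n % 3 = 1) {x : Fin 3 × Fin (n + 1)}
    (hx : x ∉ kernel n) : Even ((octPath n).neighborSet x ∩ kernel n).ncard := by
  have even_pair {b c : Fin 3} {p q : Fin (n + 1)} (hbc : b ≠ c) :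
      Even ({(b, p), (c, q)} : Set _).ncard := by
    rw [Set.ncard_pair (fun h => hbc (congrArg Prod.fst h))]
    exact even_two
  obtain ⟨a, j, hj⟩ := x
  simp only [kernel, Set.mem_ofPred_eq, not_or, not_and] at hx
  obtain ⟨i, rfl | rfl | rfl⟩ : ∃ i, j = 3 * i ∨ j = 3 * i + 1 ∨ j = 3 * i + 2 :=
    ⟨j / 3, by omega⟩
  · have ha : a = 1 ∨ a = 2 := by fin_cases a <;> simp_all
    rw [neighborSet_inter_kernel_three_mul i (by omega) a ha]
    exact even_pair (by decide)
  · have ha : a = 0 ∨ a = 2 := by fin_cases a <;> simp_all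
    rw [neighborSet_inter_kernel_three_mul_add_one i (by omega) a ha]
    exact even_pair (by decide)
  · obtain rfl | rfl | rfl : a = 0 ∨ a = 1 ∨ a = 2 := by fin_cases a <;> simp
    · rw [neighborSet_inter_kernel_three_mul_add_two i (by omega) 0 (.inl rfl)]
      exact even_pair (by decide)
    · rw [neighborSet_inter_kernel_three_mul_add_two i (by omega) 1 (.inr rfl)]
      exact even_pair (by decide)
    · rw [neighborSet_inter_kernel_three_mul_add_two_eq_empty i (by omega), Set.ncard_empty]
      exact .zero

end OctPath

open OctPath in
/-- For `n = 3m + 1`, the set `S = {u_{3i} : 0 ≤ i ≤ m} ∪ {v_{3i+1} : 0 ≤ i ≤ m}`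
is an even kernel of `Eₙ`, with the stated neighborhood intersections. -/
theorem stmt_13 (m : ℕ) :
    let G := octPath (3 * m + 1)
    let S : Set (Fin 3 × Fin (3 * m + 2)) :=
      {x | (x.1 = 0 ∧ (x.2 : ℕ) % 3 = 0) ∨ (x.1 = 1 ∧ (x.2 : ℕ) % 3 = 1)}
    (∀ a ∈ S, ∀ b ∈ S, ¬ G.Adj a b) ∧
    (∀ x ∉ S, Even {y | G.Adj x y ∧ y ∈ S}.ncard) ∧
    (∀ (i : ℕ) (hi : i ≤ m),
      ∀ a : Fin 3, a = 1 ∨ a = 2 →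
        {y | G.Adj (a, (⟨3 * i, by omega⟩ : Fin (3 * m + 2))) y ∧ y ∈ S} =
          {((0 : Fin 3), (⟨3 * i, by omega⟩ : Fin (3 * m + 2))),
           ((1 : Fin 3), (⟨3 * i + 1, by omega⟩ : Fin (3 * m + 2)))}) ∧
    (∀ (i : ℕ) (hi : i ≤ m),
      ∀ a : Fin 3, a = 0 ∨ a = 2 →
        {y | G.Adj (a, (⟨3 * i + 1, by omega⟩ : Fin (3 * m + 2))) y ∧ y ∈ S} =
          {((0 : Fin 3), (⟨3 * i, by omega⟩ : Fin (3 * m + 2))),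
           ((1 : Fin 3), (⟨3 * i + 1, by omega⟩ : Fin (3 * m + 2)))}) ∧
    (∀ (i : ℕ) (hi : i + 1 ≤ m),
      ∀ a : Fin 3, a = 0 ∨ a = 1 →
        {y | G.Adj (a, (⟨3 * i + 2, by omega⟩ : Fin (3 * m + 2))) y ∧ y ∈ S} =
          {((1 : Fin 3), (⟨3 * i + 1, by omega⟩ : Fin (3 * m + 2))),
           ((0 : Fin 3), (⟨3 * i + 3, by omega⟩ : Fin (3 * m + 2)))}) ∧
    (∀ (i : ℕ) (hi : i + 1 ≤ m),
      {y | G.Adj ((2 : Fin 3), (⟨3 * i + 2, by omega⟩ : Fin (3 * m + 2))) y ∧ y ∈ S} = ∅) := by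
  intro G S
  exact ⟨fun a ha b hb hab => isIndepSet_kernel ha hb hab.ne hab,
    fun x hx => even_ncard_neighborSet_inter_kernel (by omega) hx,
    fun i hi => neighborSet_inter_kernel_three_mul i (by omega),
    fun i hi => neighborSet_inter_kernel_three_mul_add_one i (by omega),
    fun i hi => neighborSet_inter_kernel_three_mul_add_two i (by omega),
    fun i hi => neighborSet_inter_kernel_three_mul_add_two_eq_empty i (by omega)⟩
end

section
/- Let G be a finite simple graph with starting vertex s, and let S be an even kernel of G (s ∈ S, S independent, every vertex outside S has an even number of neighbors in S). Let T be a trail starting at s whose vertices alternate between S and the complement of S (each edge of T has one endpoint in S and one outside S). If T has odd length, ending at a vertex v ∉ S, then there exists a neighbor of v in S joined to v by an edge not used by T. -/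
/-!
Suppose every neighbour of `v` in `S` is joined to `v` by an edge of `T`. Since the edges of `T`
alternate between `S` and its complement and `v ∉ S`, the edges of `T` at `v` are then exactly
the edges from `v` to its neighbours in `S`, an even number by the kernel condition. But a trail
from `s` to `v ≠ s` uses an odd number of edges at its endpoint `v`.
-/

namespace SimpleGraph.Walk

variable {V : Type*} {G : SimpleGraph V} [DecidableEq V] {u w : V} {p : G.Walk u w}

theorem IsTrail.odd_countP_edges_mem_end (hp : p.IsTrail) (huw : u ≠ w) :
    Odd (p.edges.countP fun e => w ∈ e) := by
  rw [← Nat.not_even_iff_odd, hp.even_countP_edges_iff]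
  exact fun h => (h huw).2 rfl

theorem IsTrail.ncard_setOf_mk_mem_edges (hp : p.IsTrail) (v : V) :
    {x | s(v, x) ∈ p.edges}.ncard = p.edges.countP fun e => v ∈ e := by
  have himage : Sym2.mkEmbedding v '' {x | s(v, x) ∈ p.edges} =
      ↑(p.edges.filter fun e => v ∈ e).toFinset := by
    ext e
    simp only [Set.mem_image, Set.mem_ofPred_eq, Sym2.mkEmbedding_apply, Finset.mem_coe,
      List.mem_toFinset, List.mem_filter, decide_eq_true_eq]
    constructor
    · rintro ⟨x, hx, rfl⟩
      exact ⟨hx, Sym2.mem_mk_left v x⟩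
    · rintro ⟨he, hve⟩
      obtain ⟨x, rfl⟩ := Sym2.mem_iff_exists.mp hve
      exact ⟨x, he, rfl⟩
  rw [← Set.ncard_image_of_injective _ (Sym2.mkEmbedding v).injective, himage,
    Set.ncard_coe_finset, List.toFinset_card_of_nodup (hp.edges_nodup.filter _),
    List.countP_eq_length_filter]

end SimpleGraph.Walk

theorem stmt_14_general {V : Type*} (G : SimpleGraph V)
    (s : V) (S : Set V)
    (hsS : s ∈ S)
    (hker : ∀ x : V, x ∉ S → Even {w | G.Adj x w ∧ w ∈ S}.ncard)
    (v : V) (T : G.Walk s v) (hT : T.IsTrail)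
    (halt : ∀ a b : V, s(a, b) ∈ T.edges → (a ∈ S ↔ b ∉ S))
    (hv : v ∉ S) :
    ∃ w ∈ S, G.Adj v w ∧ s(v, w) ∉ T.edges := by
  classical
  by_contra! hcon
  have hneighbors : {w | G.Adj v w ∧ w ∈ S} = {w | s(v, w) ∈ T.edges} := by
    ext w
    exact ⟨fun hw => hcon w hw.2 hw.1, fun hw =>
      ⟨T.adj_of_mem_edges hw, by simpa [hv] using (halt v w hw).not⟩⟩
  have hodd := hT.odd_countP_edges_mem_end (fun h : s = v => hv (h ▸ hsS))
  rw [← Nat.not_even_iff_odd, ← hT.ncard_setOf_mk_mem_edges, ← hneighbors] at hodd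
  exact hodd (hker v hv)

theorem stmt_14 {V : Type*} [Fintype V] (G : SimpleGraph V)
    (s : V) (S : Set V)
    (hsS : s ∈ S)
    (hind : ∀ a ∈ S, ∀ b ∈ S, ¬ G.Adj a b)
    (hker : ∀ x : V, x ∉ S → Even {w | G.Adj x w ∧ w ∈ S}.ncard)
    (v : V) (T : G.Walk s v) (hT : T.IsTrail)
    (halt : ∀ a b : V, s(a, b) ∈ T.edges → (a ∈ S ↔ b ∉ S))
    (hodd : Odd T.length) (hv : v ∉ S) :
    ∃ w ∈ S, G.Adj v w ∧ s(v, w) ∉ T.edges :=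
  stmt_14_general G s S hsS hker v T hT halt hv
end
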